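/- Let p_j ∈ ℝ³ \ {0} satisfy ∑_j 1/‖p_j‖² < ∞. Then for almost every direction v ∈ S² (with respect to surface measure), the set of projections {Π_v(p_j)}_j ⊂ v^⊥ ≅ ℂ has no accumulation point in ℂ, i.e., for every R > 0 only finitely many j satisfy ‖Π_v(p_j)‖ ≤ R. -/

import Mathlib

open MeasureTheory

/-!
For unit vectors `u`, `v` one has `‖Π_v u‖ = ‖Π_u v‖` (both equal `√(1 - ⟪u, v⟫²)`), so
`‖Π_v p‖ ≤ R` says that `v` lies within `R / ‖p‖` of the line `ℝ p`, i.e. in a pair of antipodal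
caps around `±p / ‖p‖`. In dimension `d` such caps of radius `ε` have surface measure `O(ε^(d-1))`,
as the cone over them fits in a box of side lengths `2, 2ε, …, 2ε`. Hence, for each `R`, the
summability of `‖p_j‖^(1-d)` and the first Borel–Cantelli lemma show that almost every `v` lies in
only finitely many of the caps.
-/

open Set Metric Module
open scoped RealInnerProductSpace ENNReal Pointwise

variable {E : Type*} [NormedAddCommGroup E] [InnerProductSpace ℝ E]

lemma norm_starProjection_orthogonal_span_singleton_sq {v : E} (hv : ‖v‖ = 1) (x : E) :
    ‖(ℝ ∙ v)ᗮ.starProjection x‖ ^ 2 = ‖x‖ ^ 2 - ⟪v, x⟫ ^ 2 := by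
  have h := Submodule.norm_sq_eq_add_norm_sq_starProjection x (ℝ ∙ v)
  rw [Submodule.starProjection_unit_singleton ℝ hv, norm_smul, hv, mul_one, Real.norm_eq_abs,
    sq_abs] at h
  linarith

lemma norm_starProjection_orthogonal_span_singleton_comm {u v : E} (hu : ‖u‖ = 1)
    (hv : ‖v‖ = 1) :
    ‖(ℝ ∙ v)ᗮ.starProjection u‖ = ‖(ℝ ∙ u)ᗮ.starProjection v‖ := by
  rw [← sq_eq_sq₀ (norm_nonneg _) (norm_nonneg _),
    norm_starProjection_orthogonal_span_singleton_sq hv,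
    norm_starProjection_orthogonal_span_singleton_sq hu, hu, hv, real_inner_comm]

lemma norm_starProjection_orthogonal_span_singleton_eq_mul {p : E} (hp : p ≠ 0) {v : E}
    (hv : ‖v‖ = 1) :
    ‖(ℝ ∙ v)ᗮ.starProjection p‖ = ‖p‖ * ‖(ℝ ∙ (‖p‖⁻¹ • p))ᗮ.starProjection v‖ := by
  have hp' : ‖p‖ ≠ 0 := norm_ne_zero_iff.2 hp
  conv_lhs => rw [← smul_inv_smul₀ hp' p]
  rw [map_smul, norm_smul, norm_norm,
    norm_starProjection_orthogonal_span_singleton_comm (u := ‖p‖⁻¹ • p) (norm_smul_inv_norm hp)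
      hv]

lemma abs_inner_le_norm_starProjection {K : Submodule ℝ E} [K.HasOrthogonalProjection]
    {w : E} (hwK : w ∈ K) (hw : ‖w‖ = 1) (x : E) :
    |⟪w, x⟫| ≤ ‖K.starProjection x‖ := by
  rw [← Submodule.starProjection_eq_self_iff.2 hwK, Submodule.inner_starProjection_left_eq_right]
  simpa [hw] using abs_real_inner_le_norm w (K.starProjection x)

/-- For a unit vector `u`, the points of the sphere at angle at most `arcsin ε` from the line
`ℝ u`. -/
def antipodalCaps (u : E) (ε : ℝ) : Set (sphere (0 : E) 1) :=
  {v | ‖(ℝ ∙ u)ᗮ.starProjection v‖ ≤ ε}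

lemma abs_repr_smul_le_of_mem_antipodalCaps {n : ℕ} (b : OrthonormalBasis (Fin (n + 1)) ℝ E)
    {ε : ℝ} {v : sphere (0 : E) 1} (hv : v ∈ antipodalCaps (b 0) ε) {r : ℝ} (hr : r ∈ Ioo 0 1)
    (i : Fin (n + 1)) :
    |b.repr (r • (v : E)) i| ≤ (Fin.cons 1 (fun _ => ε) : Fin (n + 1) → ℝ) i := by
  rw [b.repr_apply_apply]
  induction i using Fin.cases with
  | zero =>
    calc |⟪b 0, r • (v : E)⟫| ≤ ‖b 0‖ * ‖r • (v : E)‖ := abs_real_inner_le_norm _ _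
      _ ≤ 1 := by simp [b.orthonormal.1 0, norm_smul, abs_of_pos hr.1, hr.2.le]
  | succ k =>
    have hbk : b k.succ ∈ (ℝ ∙ b 0)ᗮ :=
      Submodule.mem_orthogonal_singleton_iff_inner_right.2
        (b.orthonormal.2 (Fin.succ_ne_zero k).symm)
    calc |⟪b k.succ, r • (v : E)⟫| ≤ ‖(ℝ ∙ b 0)ᗮ.starProjection (r • (v : E))‖ :=
          abs_inner_le_norm_starProjection hbk (b.orthonormal.1 _) _
      _ = r * ‖(ℝ ∙ b 0)ᗮ.starProjection v‖ := by
          rw [map_smul, norm_smul, Real.norm_of_nonneg hr.1.le]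
      _ ≤ 1 * ε := mul_le_mul hr.2.le hv (norm_nonneg _) zero_le_one
      _ = (Fin.cons 1 (fun _ => ε) : Fin (n + 1) → ℝ) k.succ := one_mul ε

variable [MeasurableSpace E] [BorelSpace E]

lemma measurableSet_antipodalCaps (u : E) (ε : ℝ) : MeasurableSet (antipodalCaps u ε) :=
  (isClosed_le (by fun_prop) continuous_const).measurableSet

variable [FiniteDimensional ℝ E]

theorem toSphere_antipodalCaps_le {u : E} (hu : ‖u‖ = 1) {ε : ℝ} (hε : 0 ≤ ε) :
    volume.toSphere (antipodalCaps u ε) ≤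
      ENNReal.ofReal (finrank ℝ E * 2 * (2 * ε) ^ (finrank ℝ E - 1)) := by
  have : Nontrivial E := nontrivial_of_ne u 0 (norm_ne_zero_iff.1 (by simp [hu]))
  obtain ⟨n, hn⟩ := Nat.exists_eq_succ_of_ne_zero (finrank_pos (R := ℝ) (M := E)).ne'
  obtain ⟨b, hb⟩ := Orthonormal.exists_orthonormalBasis_extension_of_card_eq
    (𝕜 := ℝ) (ι := Fin (n + 1)) (by simp [hn]) (v := fun _ => u) (s := {0}) (by simp [hu])
  obtain rfl : b 0 = u := hb 0 rfl
  let c : Fin (n + 1) → ℝ := Fin.cons 1 fun _ => ε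
  let box : Set (Fin (n + 1) → ℝ) := univ.pi fun i => Icc (-c i) (c i)
  have hbox : MeasurableSet box := .univ_pi fun _ => measurableSet_Icc
  have hcone : Ioo (0 : ℝ) 1 • (Subtype.val '' antipodalCaps (b 0) ε) ⊆
      b.repr ⁻¹' (WithLp.ofLp ⁻¹' box) := by
    rintro _ ⟨r, hr, _, ⟨v, hv, rfl⟩, rfl⟩ i -
    exact abs_le.1 (abs_repr_smul_le_of_mem_antipodalCaps b hv hr i)
  calc volume.toSphere (antipodalCaps (b 0) ε)
      = finrank ℝ E * volume (Ioo (0 : ℝ) 1 • (Subtype.val '' antipodalCaps (b 0) ε)) :=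
        Measure.toSphere_apply' _ (measurableSet_antipodalCaps (b 0) ε)
    _ ≤ finrank ℝ E * volume (b.repr ⁻¹' (WithLp.ofLp ⁻¹' box)) := by gcongr
    _ = finrank ℝ E * volume box := by
        rw [b.measurePreserving_repr.measure_preimage
            (hbox.preimage (PiLp.volume_preserving_ofLp _).measurable).nullMeasurableSet,
          (PiLp.volume_preserving_ofLp _).measure_preimage hbox.nullMeasurableSet]
    _ = ENNReal.ofReal (finrank ℝ E * 2 * (2 * ε) ^ (finrank ℝ E - 1)) := by
        rw [volume_pi_pi, Fin.prod_univ_succ]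
        simp only [Real.volume_Icc, c, Fin.cons_zero, Fin.cons_succ, Finset.prod_const,
          Finset.card_univ, Fintype.card_fin, hn]
        rw [ENNReal.ofReal_mul (by positivity), ENNReal.ofReal_mul (by positivity),
          ENNReal.ofReal_pow (by positivity), ENNReal.ofReal_natCast]
        norm_num [two_mul, mul_assoc]

theorem tsum_toSphere_antipodalCaps_ne_top {ι : Type*} {u : ι → E} (hu : ∀ j, ‖u j‖ = 1)
    {ε : ι → ℝ} (hε : ∀ j, 0 ≤ ε j) (hsum : Summable fun j => ε j ^ (finrank ℝ E - 1)) :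
    ∑' j, volume.toSphere (antipodalCaps (u j) (ε j)) ≠ ∞ := by
  have hC : Summable fun j => finrank ℝ E * 2 * (2 * ε j) ^ (finrank ℝ E - 1) := by
    simpa only [mul_pow, ← mul_assoc] using
      hsum.mul_left ((finrank ℝ E : ℝ) * 2 * 2 ^ (finrank ℝ E - 1))
  refine ne_top_of_le_ne_top ?_
    (ENNReal.tsum_le_tsum fun j => toSphere_antipodalCaps_le (hu j) (hε j))
  rw [← ENNReal.ofReal_tsum_of_nonneg (fun j => by have := hε j; positivity) hC]
  exact ENNReal.ofReal_ne_top

theorem ae_finite_setOf_norm_starProjection_le {ι : Type*} [Countable ι] {p : ι → E}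
    (hne : ∀ j, p j ≠ 0) (hsum : Summable fun j => 1 / ‖p j‖ ^ (finrank ℝ E - 1)) :
    ∀ᵐ v : sphere (0 : E) 1 ∂volume.toSphere, ∀ R : ℝ,
      {j | ‖(ℝ ∙ (v : E))ᗮ.starProjection (p j)‖ ≤ R}.Finite := by
  have hcaps (n : ℕ) : ∀ᵐ v ∂volume.toSphere,
      {j | v ∈ antipodalCaps (‖p j‖⁻¹ • p j) (n / ‖p j‖)}.Finite := by
    refine ae_finite_setOfPred_mem (tsum_toSphere_antipodalCaps_ne_top
      (fun j => norm_smul_inv_norm (hne j)) (fun j => by positivity) ?_)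
    exact (hsum.mul_left ((n : ℝ) ^ (finrank ℝ E - 1))).congr fun j => by
      rw [div_pow, mul_one_div]
  filter_upwards [ae_all_iff.2 hcaps] with v hv R
  obtain ⟨n, hRn⟩ := exists_nat_ge R
  refine (hv n).subset fun j (hj : _ ≤ R) => ?_
  rw [norm_starProjection_orthogonal_span_singleton_eq_mul (hne j) (norm_eq_of_mem_sphere v)]
    at hj
  exact (le_div_iff₀' (norm_pos_iff.2 (hne j))).2 (hj.trans hRn)

/-- If `∑_j 1/‖p_j‖² < ∞`, then for almost every direction `v ∈ S²` the set of
orthogonal projections `Π_v(p_j)` onto `v^⊥` has no accumulation point: for every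
`R > 0` only finitely many `j` satisfy `‖Π_v(p_j)‖ ≤ R`. -/
theorem stmt8 (p : ℕ → EuclideanSpace ℝ (Fin 3)) (hne : ∀ j, p j ≠ 0)
    (hsum : Summable fun j : ℕ => 1 / ‖p j‖ ^ 2) :
    ∀ᵐ v : Metric.sphere (0 : EuclideanSpace ℝ (Fin 3)) 1
        ∂(volume : Measure (EuclideanSpace ℝ (Fin 3))).toSphere,
      ∀ R : ℝ, 0 < R →
        {j : ℕ |
          ‖(Submodule.orthogonalProjectionOnto ((ℝ ∙ (v : EuclideanSpace ℝ (Fin 3)))ᗮ) (p j) :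
              (ℝ ∙ (v : EuclideanSpace ℝ (Fin 3)))ᗮ)‖ ≤ R}.Finite := by
  have hd : finrank ℝ (EuclideanSpace ℝ (Fin 3)) - 1 = 2 := by simp
  filter_upwards [ae_finite_setOf_norm_starProjection_le hne (hd ▸ hsum)] with v hv R _
  simpa only [Submodule.coe_norm, Submodule.coe_orthogonalProjectionOnto_apply] using hv R
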